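/- arXiv:1803.01397 — 3 statements merged into one kernel-verified Lean document; each statement's English description precedes it below -/
import Mathlib

section
/- Let m ≥ 2 be an integer and p = (p_1,…,p_m) ∈ (1,∞]^m be such that 1 < p_m ≤ 2 < p_1,…,p_{m−1} and 1/2 ≤ |1/p| < 1. Then for every positive integer n and every m-linear form T : ℓ_{p_1}^n × ⋯ × ℓ_{p_m}^n → 𝕂, (∑_{j_1,…,j_m=1}^n |T(e_{j_1},…,e_{j_m})|^{1/(1−|1/p|)})^{1−|1/p|} ≤ ‖T‖. -/
open scoped ENNReal

/-- The `j`-th canonical unit vector of `ℓ_q^n` over `𝕂`. -/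
noncomputable def unitVec (𝕂 : Type*) [RCLike 𝕂] (q : ℝ≥0∞) {n : ℕ} (j : Fin n) :
    PiLp q (fun _ : Fin n => 𝕂) :=
  (WithLp.equiv q (∀ _ : Fin n, 𝕂)).symm (Pi.single j 1)

/-!
Induction on the number of variables, peeling off the first one. Write `t = 1/p_1` and
`σ' = ∑_{i ≥ 2} 1/p_i`; since `σ' ≥ 1/p_m ≥ 1/2`, the exponent `μ = 1/(1 - σ')` is at least `2`.
For `y` in the unit ball of `ℓ_{p_1}` the form `T(y, ·, …, ·)` has norm at most `‖T‖`, so by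
induction the coefficients `∑_k y_k T(e_k, e_j)` are `ℓ_μ`-bounded by `‖T‖`. Choosing the signs
of `y_k = ±x_k` well (Khinchin's inequality with constant `1`, valid because `μ ≥ 2`) gives
`∑_k |x_k|^μ ∑_j |T(e_k, e_j)|^μ ≤ ‖T‖^μ` for every `x` in the ball, so by `ℓ_{p_1/μ}`-duality
the column sums are `ℓ_ρ`-bounded, `ρ = 1/(1 - μ t)`. Superadditivity of `s ↦ s^ρ` then yields
the `ℓ_{μρ}`-bound, and `μρ = 1/(1 - |1/p|)`. The one-variable case is the duality
of `ℓ_{p_m}` and `ℓ_{p_m'}`.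
-/

open scoped NNReal
open Finset

theorem NNReal.sum_rpow_le_rpow_sum {ι : Type*} (s : Finset ι) (f : ι → ℝ≥0) {c : ℝ}
    (hc : 1 ≤ c) : ∑ i ∈ s, f i ^ c ≤ (∑ i ∈ s, f i) ^ c := by
  classical
  induction s using Finset.induction_on with
  | empty => simp [NNReal.zero_rpow (by positivity : c ≠ 0)]
  | insert a s ha ih =>
    rw [sum_insert ha, sum_insert ha]
    exact (add_le_add_right ih _).trans (NNReal.add_rpow_le_rpow_add _ _ hc)

theorem Real.sum_rpow_le_rpow_sum {ι : Type*} (s : Finset ι) {f : ι → ℝ} (hf : ∀ i, 0 ≤ f i)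
    {c : ℝ} (hc : 1 ≤ c) : ∑ i ∈ s, f i ^ c ≤ (∑ i ∈ s, f i) ^ c := by
  lift f to ι → ℝ≥0 using hf
  have := NNReal.coe_le_coe.mpr (NNReal.sum_rpow_le_rpow_sum s f hc)
  push_cast at this
  exact this

theorem Fintype.sum_fin_succ_pi {α M : Type*} [Fintype α] [AddCommMonoid M] {n : ℕ}
    (g : (Fin (n + 1) → α) → M) :
    ∑ j, g j = ∑ k, ∑ j : Fin n → α, g (Fin.cons k j) := by
  rw [← (Fin.consEquiv fun _ => α).sum_comp, Fintype.sum_prod_type]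
  rfl

section Signs

variable {E : Type*} [NormedAddCommGroup E] [InnerProductSpace ℝ E]

theorem sum_norm_units_smul_sum_sq {n : ℕ} (a : Fin n → E) :
    ∑ ε : Fin n → ℤˣ, ‖∑ k, ε k • a k‖ ^ 2 = 2 ^ n * ∑ k, ‖a k‖ ^ 2 := by
  induction n with
  | zero => simp
  | succ n ih =>
    have parallelogram (x : E) :
        ∑ e : ℤˣ, ‖e • a 0 + x‖ ^ 2 = 2 * ‖x‖ ^ 2 + 2 * ‖a 0‖ ^ 2 := by
      have := parallelogram_law_with_norm ℝ x (a 0)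
      rw [UnitsInt.univ, sum_pair (by decide), one_smul, Units.neg_smul, one_smul,
        add_comm (a 0), neg_add_eq_sub]
      linarith
    rw [Fintype.sum_fin_succ_pi, Finset.sum_comm]
    simp only [Fin.sum_univ_succ, Fin.cons_zero, Fin.cons_succ, parallelogram, sum_add_distrib,
      ← mul_sum, ih fun k => a k.succ, sum_const, card_univ, Fintype.card_pi, prod_const,
      Fintype.card_units_int, Fintype.card_fin, nsmul_eq_mul]
    push_cast
    ring

theorem two_pow_mul_sum_norm_rpow_le {n : ℕ} {μ : ℝ} (hμ : 2 ≤ μ) (a : Fin n → E) :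
    2 ^ n * ∑ k, ‖a k‖ ^ μ ≤ ∑ ε : Fin n → ℤˣ, ‖∑ k, ε k • a k‖ ^ μ := by
  have hμ2 : 1 ≤ μ / 2 := by linarith
  have sq_rpow (x : ℝ) (hx : 0 ≤ x) : (x ^ 2) ^ (μ / 2) = x ^ μ := by
    rw [← Real.rpow_natCast, ← Real.rpow_mul hx]; ring_nf
  have jensen := Real.rpow_arith_mean_le_arith_mean_rpow univ (fun _ => (2 ^ n : ℝ)⁻¹)
    (fun ε : Fin n → ℤˣ => ‖∑ k, ε k • a k‖ ^ 2) (fun _ _ => by positivity)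
    (by simp) (fun _ _ => by positivity) hμ2
  rw [← mul_sum, ← mul_sum, sum_norm_units_smul_sum_sq,
    inv_mul_cancel_left₀ (by positivity)] at jensen
  simp only [sq_rpow _ (norm_nonneg _)] at jensen
  calc 2 ^ n * ∑ k, ‖a k‖ ^ μ = 2 ^ n * ∑ k, (‖a k‖ ^ 2) ^ (μ / 2) := by
        simp only [sq_rpow _ (norm_nonneg _)]
    _ ≤ 2 ^ n * (∑ k, ‖a k‖ ^ 2) ^ (μ / 2) := by
        gcongr; exact Real.sum_rpow_le_rpow_sum _ (fun _ => by positivity) hμ2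
    _ ≤ ∑ ε : Fin n → ℤˣ, ‖∑ k, ε k • a k‖ ^ μ := (le_inv_mul_iff₀ (by positivity)).mp jensen

theorem exists_signs_sum_sum_norm_rpow_le {ι : Type*} [Fintype ι] {n : ℕ} {μ : ℝ} (hμ : 2 ≤ μ)
    (a : Fin n → ι → E) :
    ∃ ε : Fin n → ℤˣ, ∑ j, ∑ k, ‖a k j‖ ^ μ ≤ ∑ j, ‖∑ k, ε k • a k j‖ ^ μ := by
  have averaged : ∑ _ε : Fin n → ℤˣ, ∑ j, ∑ k, ‖a k j‖ ^ μ
      ≤ ∑ ε : Fin n → ℤˣ, ∑ j, ‖∑ k, ε k • a k j‖ ^ μ := by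
    rw [sum_const, card_univ, Fintype.card_pi, prod_const, Fintype.card_units_int, card_univ,
      Fintype.card_fin, nsmul_eq_mul, mul_sum, sum_comm]
    exact sum_le_sum fun j _ => by exact_mod_cast two_pow_mul_sum_norm_rpow_le hμ fun k => a k j
  obtain ⟨ε, -, hε⟩ := exists_le_of_sum_le univ_nonempty averaged
  exact ⟨ε, hε⟩

end Signs

section PiLp

variable {ι : Type*} [Fintype ι] {p : ℝ≥0∞} [Fact (1 ≤ p)]

theorem PiLp.norm_toLp_le_norm_toLp {β : ι → Type*} [∀ i, SeminormedAddCommGroup (β i)]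
    {x y : ∀ i, β i} (h : ∀ i, ‖y i‖ ≤ ‖x i‖) : ‖WithLp.toLp p y‖ ≤ ‖WithLp.toLp p x‖ := by
  rcases p.dichotomy with rfl | hp
  · simp only [PiLp.norm_eq_ciSup]
    exact ciSup_mono (Set.finite_range _).bddAbove h
  · have hp0 : 0 < p.toReal := by linarith
    simp only [PiLp.norm_eq_sum hp0]
    gcongr with i
    exact h i

variable {𝕂 : Type*} [RCLike 𝕂]

theorem sum_rpow_le_of_forall_norm_toLp_le_one {μ B : ℝ}
    (hμp : μ * (1 / p).toReal < 1) (hB : 0 ≤ B) {w : ι → ℝ} (hw : ∀ k, 0 ≤ w k)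
    (H : ∀ x : ι → 𝕂, ‖WithLp.toLp p x‖ ≤ 1 → ∑ k, ‖x k‖ ^ μ * w k ≤ B) :
    ∑ k, w k ^ (1 / (1 - μ * (1 / p).toReal)) ≤ B ^ (1 / (1 - μ * (1 / p).toReal)) := by
  rcases p.dichotomy with rfl | hp
  · have hball : ‖WithLp.toLp ∞ (1 : ι → 𝕂)‖ ≤ 1 := by
      rw [PiLp.norm_eq_ciSup]
      exact Real.iSup_le (fun k => by simp) zero_le_one
    simpa using H 1 hball
  set q := p.toReal with hq_def
  have hq : 0 < q := by linarith
  have hr : μ * (1 / p).toReal = μ / q := by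
    rw [one_div, ENNReal.toReal_inv, div_eq_mul_inv]
  rw [hr] at hμp ⊢
  set ρ := 1 / (1 - μ / q) with hρ
  have hρ0 : 0 < ρ := one_div_pos.mpr (by linarith)
  have hρr : ρ / q * μ + 1 = ρ := by
    have : q - μ ≠ 0 := by rw [div_lt_one hq] at hμp; linarith
    rw [hρ]; field_simp; ring
  set S := ∑ k, w k ^ ρ with hS
  have hS_nonneg : 0 ≤ S := sum_nonneg fun k _ => Real.rpow_nonneg (hw k) ρ
  rcases hS_nonneg.eq_or_lt with hS0 | hS0
  · rw [← hS0]; positivity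
  -- the extremal vector of Hölder's inequality for the pair `ℓ_{q/μ}`, `ℓ_ρ`
  set x : ι → 𝕂 := fun k => ((w k ^ (ρ / q) / S ^ (1 / q) : ℝ) : 𝕂)
  have hx (k) (r : ℝ) : ‖x k‖ ^ r = w k ^ (ρ / q * r) / S ^ (1 / q * r) := by
    have hw' := Real.rpow_nonneg (hw k) (ρ / q)
    have hS' := Real.rpow_nonneg hS_nonneg (1 / q)
    rw [RCLike.norm_ofReal, abs_of_nonneg (div_nonneg hw' hS'), Real.div_rpow hw' hS',
      ← Real.rpow_mul (hw k), ← Real.rpow_mul hS_nonneg]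
  have hxq (k) : ‖x k‖ ^ q = w k ^ ρ / S := by
    rw [hx, div_mul_cancel₀ _ hq.ne', one_div_mul_cancel hq.ne', Real.rpow_one]
  have hxμ (k) : ‖x k‖ ^ μ * w k = w k ^ ρ / S ^ (μ / q) := by
    rw [hx, div_mul_eq_mul_div, ← Real.rpow_add_one' (hw k) (by rw [hρr]; positivity), hρr,
      one_div_mul_eq_div]
  have hnorm : ‖WithLp.toLp p x‖ = 1 := by
    rw [PiLp.norm_eq_sum hq, ← hq_def]
    simp only [hxq, ← sum_div, ← hS, div_self hS0.ne', Real.one_rpow]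
  have key := H x hnorm.le
  simp only [hxμ, ← sum_div, ← hS] at key
  rw [show S / S ^ (μ / q) = S ^ ρ⁻¹ by
    rw [hρ, one_div, inv_inv, Real.rpow_sub hS0, Real.rpow_one]] at key
  exact (Real.rpow_inv_le_iff_of_pos hS_nonneg hB hρ0).mp key

theorem sum_norm_rpow_le_of_forall_norm_sum_mul_le (hp : (1 / p).toReal < 1) {M : ℝ}
    (hM : 0 ≤ M) (d : ι → 𝕂)
    (H : ∀ x : ι → 𝕂, ‖WithLp.toLp p x‖ ≤ 1 → ‖∑ k, x k * d k‖ ≤ M) :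
    ∑ k, ‖d k‖ ^ (1 / (1 - (1 / p).toReal)) ≤ M ^ (1 / (1 - (1 / p).toReal)) := by
  have H' (x : ι → 𝕂) (hx : ‖WithLp.toLp p x‖ ≤ 1) : ∑ k, ‖x k‖ ^ (1 : ℝ) * ‖d k‖ ≤ M := by
    -- rotate each coordinate of `x` so that `x k * d k` becomes `‖x k‖ * ‖d k‖ ≥ 0`
    set y : ι → 𝕂 := fun k => ((‖x k‖ / ‖d k‖ : ℝ) : 𝕂) * starRingEnd 𝕂 (d k)
    have hy (k) : ‖y k‖ ≤ ‖x k‖ ∧ y k * d k = ((‖x k‖ * ‖d k‖ : ℝ) : 𝕂) := by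
      by_cases hd : d k = 0
      · simp [y, hd]
      have hd' : ‖d k‖ ≠ 0 := norm_ne_zero_iff.mpr hd
      constructor
      · simp [y, hd']
      · simp only [y, mul_assoc, RCLike.conj_mul]
        push_cast
        field_simp
    calc ∑ k, ‖x k‖ ^ (1 : ℝ) * ‖d k‖ = ‖∑ k, y k * d k‖ := by
          simp only [Real.rpow_one, fun k => (hy k).2, ← RCLike.ofReal_sum, RCLike.norm_ofReal]
          exact (abs_of_nonneg (sum_nonneg fun k _ => by positivity)).symm
      _ ≤ M := H y ((PiLp.norm_toLp_le_norm_toLp fun k => (hy k).1).trans hx)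
  simpa only [one_mul] using sum_rpow_le_of_forall_norm_toLp_le_one (μ := 1) (by rwa [one_mul]) hM
    (fun k => norm_nonneg (d k)) H'

end PiLp

section Multilinear

variable {𝕂 : Type*} [RCLike 𝕂] {n : ℕ}

theorem toLp_eq_sum_smul_unitVec (q : ℝ≥0∞) (x : Fin n → 𝕂) :
    WithLp.toLp q x = ∑ k, x k • unitVec 𝕂 q k := by
  have := (PiLp.basisFun q 𝕂 (Fin n)).sum_repr (WithLp.toLp q x)
  simp only [PiLp.basisFun_repr, PiLp.basisFun_apply] at this
  exact this.symm

theorem unitVec_comp_cons {m : ℕ} (p : Fin (m + 1) → ℝ≥0∞) (k : Fin n) (j : Fin m → Fin n) :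
    (fun i => unitVec 𝕂 (p i) ((Fin.cons k j : Fin (m + 1) → Fin n) i)) =
      Fin.cons (unitVec 𝕂 (p 0) k) fun i => unitVec 𝕂 (p i.succ) (j i) := by
  funext i
  cases i using Fin.cases <;> rfl

theorem ContinuousMultilinearMap.apply_cons_toLp {m : ℕ} {p : Fin (m + 1) → ℝ≥0∞}
    [∀ i, Fact (1 ≤ p i)]
    (T : ContinuousMultilinearMap 𝕂 (fun i => PiLp (p i) fun _ : Fin n => 𝕂) 𝕂)
    (x : Fin n → 𝕂) (v : ∀ i : Fin m, PiLp (p i.succ) fun _ : Fin n => 𝕂) :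
    T (Fin.cons (WithLp.toLp (p 0) x) v) = ∑ k, x k * T (Fin.cons (unitVec 𝕂 (p 0) k) v) := by
  rw [← T.curryLeft_apply, toLp_eq_sum_smul_unitVec, _root_.map_sum]
  simp only [_root_.map_smul, _root_.sum_apply, smul_apply, curryLeft_apply, smul_eq_mul]

theorem sum_norm_rpow_mul_sum_le_of_forall_norm_toLp_le_one {ι : Type*} [Fintype ι]
    {p : ℝ≥0∞} [Fact (1 ≤ p)] {μ B : ℝ} (hμ : 2 ≤ μ) (a : Fin n → ι → 𝕂)
    (H : ∀ y : Fin n → 𝕂, ‖WithLp.toLp p y‖ ≤ 1 → ∑ j, ‖∑ k, y k * a k j‖ ^ μ ≤ B)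
    (x : Fin n → 𝕂) (hx : ‖WithLp.toLp p x‖ ≤ 1) :
    ∑ k, ‖x k‖ ^ μ * ∑ j, ‖a k j‖ ^ μ ≤ B := by
  obtain ⟨ε, hε⟩ := exists_signs_sum_sum_norm_rpow_le hμ fun k j => x k * a k j
  have hy : ‖WithLp.toLp p (fun k => ε k • x k)‖ ≤ 1 :=
    (PiLp.norm_toLp_le_norm_toLp fun k => (norm_units_zsmul _ _).le).trans hx
  calc ∑ k, ‖x k‖ ^ μ * ∑ j, ‖a k j‖ ^ μ = ∑ j, ∑ k, ‖x k * a k j‖ ^ μ := by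
        simp only [mul_sum, norm_mul, Real.mul_rpow (norm_nonneg _) (norm_nonneg _)]
        exact sum_comm
    _ ≤ ∑ j, ‖∑ k, ε k • x k * a k j‖ ^ μ := by simpa only [smul_mul_assoc] using hε
    _ ≤ B := H _ hy

theorem sum_norm_apply_unitVec_rpow_le_of_tail {m : ℕ} (p : Fin (m + 1) → ℝ≥0∞)
    [∀ i, Fact (1 ≤ p i)] {μ : ℝ} (hμ : 2 ≤ μ) (hμp : μ * (1 / p 0).toReal < 1)
    (htail : ∀ S : ContinuousMultilinearMap 𝕂
        (fun i : Fin m => PiLp (p i.succ) fun _ : Fin n => 𝕂) 𝕂,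
      ∑ j : Fin m → Fin n, ‖S fun i => unitVec 𝕂 (p i.succ) (j i)‖ ^ μ ≤ ‖S‖ ^ μ)
    (T : ContinuousMultilinearMap 𝕂 (fun i => PiLp (p i) fun _ : Fin n => 𝕂) 𝕂) :
    ∑ j : Fin (m + 1) → Fin n,
        ‖T fun i => unitVec 𝕂 (p i) (j i)‖ ^ (μ * (1 / (1 - μ * (1 / p 0).toReal)))
      ≤ ‖T‖ ^ (μ * (1 / (1 - μ * (1 / p 0).toReal))) := by
  set ρ := 1 / (1 - μ * (1 / p 0).toReal) with hρ_def
  have hρ : 1 ≤ ρ := by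
    rw [hρ_def, le_div_iff₀ (by linarith), one_mul, sub_le_self_iff]
    exact mul_nonneg (by linarith) ENNReal.toReal_nonneg
  set a : Fin n → (Fin m → Fin n) → 𝕂 := fun k j =>
    T (Fin.cons (unitVec 𝕂 (p 0) k) fun i => unitVec 𝕂 (p i.succ) (j i))
  have contracted (y : Fin n → 𝕂) (hy : ‖WithLp.toLp (p 0) y‖ ≤ 1) :
      ∑ j, ‖∑ k, y k * a k j‖ ^ μ ≤ ‖T‖ ^ μ := by
    have h := htail (T.curryLeft (WithLp.toLp (p 0) y))
    refine (Eq.trans_le (sum_congr rfl fun j _ => ?_) h).trans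
      (Real.rpow_le_rpow (norm_nonneg _) ?_ (by positivity))
    · rw [ContinuousMultilinearMap.curryLeft_apply, T.apply_cons_toLp]
    calc ‖T.curryLeft (WithLp.toLp (p 0) y)‖ ≤ ‖T‖ * ‖WithLp.toLp (p 0) y‖ := by
          simpa using T.curryLeft.le_opNorm (WithLp.toLp (p 0) y)
      _ ≤ ‖T‖ := mul_le_of_le_one_right (norm_nonneg _) hy
  rw [Fintype.sum_fin_succ_pi]
  calc ∑ k, ∑ j : Fin m → Fin n,
        ‖T fun i => unitVec 𝕂 (p i) ((Fin.cons k j : Fin (m + 1) → Fin n) i)‖ ^ (μ * ρ)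
        = ∑ k, ∑ j, (‖a k j‖ ^ μ) ^ ρ := by
          simp only [unitVec_comp_cons, Real.rpow_mul (norm_nonneg _), a]
    _ ≤ ∑ k, (∑ j, ‖a k j‖ ^ μ) ^ ρ :=
        sum_le_sum fun k _ => Real.sum_rpow_le_rpow_sum _ (fun j => by positivity) hρ
    _ ≤ (‖T‖ ^ μ) ^ ρ :=
        sum_rpow_le_of_forall_norm_toLp_le_one hμp (by positivity) (fun k => by positivity)
          (sum_norm_rpow_mul_sum_le_of_forall_norm_toLp_le_one hμ a contracted)
    _ = ‖T‖ ^ (μ * ρ) := (Real.rpow_mul (norm_nonneg _) _ _).symm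

theorem sum_norm_apply_unitVec_rpow_le {m : ℕ} (p : Fin (m + 1) → ℝ≥0∞) [∀ i, Fact (1 ≤ p i)]
    (hlast : 1 / 2 ≤ (1 / p (Fin.last m)).toReal) (hsum : ∑ i, (1 / p i).toReal < 1)
    (T : ContinuousMultilinearMap 𝕂 (fun i => PiLp (p i) fun _ : Fin n => 𝕂) 𝕂) :
    ∑ j : Fin (m + 1) → Fin n,
        ‖T fun i => unitVec 𝕂 (p i) (j i)‖ ^ (1 / (1 - ∑ i, (1 / p i).toReal))
      ≤ ‖T‖ ^ (1 / (1 - ∑ i, (1 / p i).toReal)) := by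
  induction m with
  | zero =>
    rw [Fin.sum_univ_one] at hsum ⊢
    rw [Fintype.sum_fin_succ_pi]
    simp only [Fintype.sum_unique, unitVec_comp_cons]
    refine sum_norm_rpow_le_of_forall_norm_sum_mul_le hsum (norm_nonneg T) _ fun x hx => ?_
    rw [← T.apply_cons_toLp]
    calc _ ≤ ‖T‖ * ‖WithLp.toLp (p 0) x‖ * ∏ i : Fin 0, ‖_‖ := T.norm_map_cons_le _ _
      _ ≤ ‖T‖ := by simpa using mul_le_of_le_one_right (norm_nonneg _) hx
  | succ m ih =>
    set t := (1 / p 0).toReal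
    set σ' := ∑ i : Fin (m + 1), (1 / p i.succ).toReal
    have hσ : ∑ i, (1 / p i).toReal = t + σ' := Fin.sum_univ_succ _
    have ht : 0 ≤ t := ENNReal.toReal_nonneg
    have hlast' : 1 / 2 ≤ (1 / p (Fin.last m).succ).toReal := by rwa [Fin.succ_last]
    have hσ'_half : 1 / 2 ≤ σ' := hlast'.trans <| single_le_sum
      (f := fun i : Fin (m + 1) => (1 / p i.succ).toReal) (fun _ _ => ENNReal.toReal_nonneg)
      (mem_univ (Fin.last m))
    have hσ'_lt : σ' < 1 := by linarith
    set μ := 1 / (1 - σ') with hμ_def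
    have hμσ' : μ * (1 - σ') = 1 := by rw [hμ_def]; field_simp [show 1 - σ' ≠ 0 by linarith]
    have hμ : 2 ≤ μ := by rw [hμ_def, le_div_iff₀ (by linarith)]; linarith
    have hμt : μ * t < 1 := by
      rw [hμ_def, one_div_mul_eq_div, div_lt_one (by linarith)]; linarith
    have hexp : μ * (1 / (1 - μ * t)) = 1 / (1 - ∑ i, (1 / p i).toReal) := by
      rw [hσ, mul_one_div, div_eq_div_iff (by linarith) (by linarith)]
      linear_combination hμσ'
    rw [← hexp]
    exact sum_norm_apply_unitVec_rpow_le_of_tail p hμ hμt (ih _ hlast' hσ'_lt) T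

end Multilinear

theorem stmt5 (𝕂 : Type*) [RCLike 𝕂] (m : ℕ) (hm : 2 ≤ m)
    (p : Fin m → ℝ≥0∞) [∀ i, Fact (1 ≤ p i)]
    -- `1 < p_m ≤ 2 < p_1, …, p_{m-1}`:
    (hpm : p ⟨m - 1, by omega⟩ ≤ 2)
    (hhi : ∑ i, (1 / p i).toReal < 1)
    (n : ℕ)
    (T : ContinuousMultilinearMap 𝕂 (fun i : Fin m => PiLp (p i) (fun _ : Fin n => 𝕂)) 𝕂) :
    (∑ j : Fin m → Fin n,
        ‖T (fun i => unitVec 𝕂 (p i) (j i))‖ ^ ((1 : ℝ) / (1 - ∑ i, (1 / p i).toReal))) ^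
        (1 - ∑ i, (1 / p i).toReal)
      ≤ ‖T‖ := by
  obtain ⟨m, rfl⟩ : ∃ k, m = k + 1 := ⟨m - 1, by omega⟩
  have hlast : 1 / 2 ≤ (1 / p (Fin.last m)).toReal := by
    have hpm : p (Fin.last m) ≤ 2 := hpm
    have hp_ne_top : p (Fin.last m) ≠ ∞ := ne_top_of_le_ne_top (by simp) hpm
    have hp_pos : 0 < (p (Fin.last m)).toReal :=
      ENNReal.toReal_pos (one_pos.trans_le Fact.out).ne' hp_ne_top
    rw [one_div (2 : ℝ), one_div (p _), ENNReal.toReal_inv]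
    exact inv_anti₀ hp_pos (ENNReal.toReal_le_of_le_ofReal zero_le_two (by simpa using hpm))
  have hσ : 0 < 1 - ∑ i, (1 / p i).toReal := by linarith
  calc _ ≤ (‖T‖ ^ (1 / (1 - ∑ i, (1 / p i).toReal))) ^ (1 - ∑ i, (1 / p i).toReal) :=
        Real.rpow_le_rpow (sum_nonneg fun _ _ => by positivity)
          (sum_norm_apply_unitVec_rpow_le p hlast hhi T) hσ.le
    _ = ‖T‖ := by rw [← Real.rpow_mul (norm_nonneg _), one_div_mul_cancel hσ.ne', Real.rpow_one]
end

section
/- For every positive integer n and every bilinear form T : ℓ_∞^n × ℓ_∞^n → ℂ, (∑_{j,k=1}^n |T(e_j, e_k)|^{4/3})^{3/4} ≤ √2 ‖T‖. -/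
open scoped ENNReal

/-- The `j`-th canonical unit vector of `ℓ_∞^n` over `ℂ`. -/
noncomputable def unitVecInf {n : ℕ} (j : Fin n) : PiLp ⊤ (fun _ : Fin n => ℂ) :=
  (WithLp.equiv ⊤ (∀ _ : Fin n, ℂ)).symm (Pi.single j 1)

/-!
Littlewood's argument. Testing `T` against `x ∈ ℓ_∞` and random vectors of fourth roots of unity
and applying Khintchine's inequality `(∑ₖ |cₖ|²)^{1/2} ≤ √2 𝔼 |∑ₖ εₖ cₖ|` (which follows from
`𝔼|S|⁴ ≤ 2 (𝔼|S|²)²` and the log-convexity bound `(𝔼|S|²)³ ≤ (𝔼|S|)² 𝔼|S|⁴`) bounds both mixed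
norms `∑ⱼ (∑ₖ |T(eⱼ, eₖ)|²)^{1/2}` and `∑ₖ (∑ⱼ |T(eⱼ, eₖ)|²)^{1/2}` by `√2 ‖T‖`. Hölder's and
Minkowski's inequalities then bound the `ℓ^{4/3}` norm of the coefficient matrix by the geometric
mean of these two mixed norms.
-/

open Finset Complex
open scoped BigOperators

lemma expect_fin_four_I_pow (g : ℂ → ℝ) :
    𝔼 t : Fin 4, g (I ^ (t : ℕ)) = (g 1 + g I + g (-1) + g (-I)) / 4 := by
  simp [Fintype.expect_eq_sum_div_card, Fin.sum_univ_four, pow_succ]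

lemma expect_norm_I_pow_mul_add_sq (u v : ℂ) :
    𝔼 t : Fin 4, ‖I ^ (t : ℕ) * u + v‖ ^ 2 = ‖u‖ ^ 2 + ‖v‖ ^ 2 := by
  rw [expect_fin_four_I_pow fun w => ‖w * u + v‖ ^ 2]
  simp only [Complex.sq_norm, normSq_apply,
    add_re, add_im, mul_re, mul_im, neg_re, neg_im, one_re, one_im, I_re, I_im]
  ring

lemma expect_norm_I_pow_mul_add_pow_four (u v : ℂ) :
    𝔼 t : Fin 4, ‖I ^ (t : ℕ) * u + v‖ ^ 4
      = ‖u‖ ^ 4 + 4 * ‖u‖ ^ 2 * ‖v‖ ^ 2 + ‖v‖ ^ 4 := by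
  have h (w : ℂ) : ‖w‖ ^ 4 = normSq w ^ 2 := by rw [← Complex.sq_norm, ← pow_mul]
  rw [expect_fin_four_I_pow fun w => ‖w * u + v‖ ^ 4]
  simp only [h, Complex.sq_norm, normSq_apply,
    add_re, add_im, mul_re, mul_im, neg_re, neg_im, one_re, one_im, I_re, I_im]
  ring

lemma expect_sq_pow_three_le {α : Type*} (s : Finset α) (f : α → ℝ) (hf : ∀ i ∈ s, 0 ≤ f i) :
    (𝔼 i ∈ s, f i ^ 2) ^ 3 ≤ (𝔼 i ∈ s, f i) ^ 2 * 𝔼 i ∈ s, f i ^ 4 := by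
  set m₂ := 𝔼 i ∈ s, f i ^ 2
  have hm₂ : 0 ≤ m₂ := expect_nonneg fun i _ => sq_nonneg (f i)
  have cs₁ : m₂ ^ 2 ≤ (𝔼 i ∈ s, f i) * 𝔼 i ∈ s, f i ^ 3 := by
    calc m₂ ^ 2 = (𝔼 i ∈ s, √(f i) * (√(f i) * f i)) ^ 2 := by
          congr 1
          exact expect_congr rfl fun i hi => by rw [← mul_assoc, Real.mul_self_sqrt (hf i hi), sq]
      _ ≤ (𝔼 i ∈ s, √(f i) ^ 2) * 𝔼 i ∈ s, (√(f i) * f i) ^ 2 := expect_mul_sq_le_sq_mul_sq ..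
      _ = (𝔼 i ∈ s, f i) * 𝔼 i ∈ s, f i ^ 3 := by
          congr 1 <;> refine expect_congr rfl fun i hi => ?_
          · exact Real.sq_sqrt (hf i hi)
          · rw [mul_pow, Real.sq_sqrt (hf i hi)]; ring
  have cs₂ : (𝔼 i ∈ s, f i ^ 3) ^ 2 ≤ m₂ * 𝔼 i ∈ s, f i ^ 4 := by
    calc (𝔼 i ∈ s, f i ^ 3) ^ 2 = (𝔼 i ∈ s, f i * f i ^ 2) ^ 2 := by simp only [← pow_succ']
      _ ≤ m₂ * 𝔼 i ∈ s, (f i ^ 2) ^ 2 := expect_mul_sq_le_sq_mul_sq ..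
      _ = m₂ * 𝔼 i ∈ s, f i ^ 4 := by simp only [← pow_mul]
  have key : m₂ ^ 3 * m₂ ≤ ((𝔼 i ∈ s, f i) ^ 2 * 𝔼 i ∈ s, f i ^ 4) * m₂ := by
    calc m₂ ^ 3 * m₂ = (m₂ ^ 2) ^ 2 := by ring
      _ ≤ ((𝔼 i ∈ s, f i) * 𝔼 i ∈ s, f i ^ 3) ^ 2 := pow_le_pow_left₀ (sq_nonneg _) cs₁ 2
      _ ≤ (𝔼 i ∈ s, f i) ^ 2 * (m₂ * 𝔼 i ∈ s, f i ^ 4) := by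
          rw [mul_pow]; exact mul_le_mul_of_nonneg_left cs₂ (sq_nonneg _)
      _ = _ := by ring
  rcases hm₂.eq_or_lt with h | h
  · rw [← h, zero_pow three_ne_zero]
    exact mul_nonneg (sq_nonneg _) (expect_nonneg fun i _ => by positivity)
  · exact le_of_mul_le_mul_right key h

section Khintchine

variable {ι : Type*}

/-- For `z` uniformly distributed on `ι → Fin 4`, the `I ^ z k` are independent uniformly
distributed fourth roots of unity, so `𝔼 z` below is the expectation over these random signs. -/
noncomputable def fourthRootSum (c : ι → ℂ) (A : Finset ι) (z : ι → Fin 4) : ℂ :=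
  ∑ k ∈ A, I ^ (z k : ℕ) * c k

variable [Fintype ι] [DecidableEq ι]

lemma expect_fourthRootSum_insert (F : ℂ → ℝ) (c : ι → ℂ) {a : ι} {A : Finset ι} (ha : a ∉ A) :
    𝔼 z, F (fourthRootSum c (insert a A) z)
      = 𝔼 z, 𝔼 t : Fin 4, F (I ^ (t : ℕ) * c a + fourthRootSum c A z) := by
  have shift (t : Fin 4) : 𝔼 z, F (I ^ ((z a + t : Fin 4) : ℕ) * c a + fourthRootSum c A z)
      = 𝔼 z, F (I ^ (z a : ℕ) * c a + fourthRootSum c A z) := by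
    refine Fintype.expect_equiv (Equiv.addRight (Pi.single a t)) _ _ fun z => ?_
    have : fourthRootSum c A (z + Pi.single a t) = fourthRootSum c A z :=
      sum_congr rfl fun k hk => by
        rw [Pi.add_apply, Pi.single_eq_of_ne (ne_of_mem_of_not_mem hk ha), add_zero]
    simp [this]
  calc 𝔼 z, F (fourthRootSum c (insert a A) z)
      = 𝔼 t : Fin 4, 𝔼 z, F (I ^ ((z a + t : Fin 4) : ℕ) * c a + fourthRootSum c A z) := by
        rw [expect_congr rfl fun t _ => shift t, Fintype.expect_const]
        simp only [fourthRootSum, sum_insert ha]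
    _ = 𝔼 z, 𝔼 t : Fin 4, F (I ^ ((z a + t : Fin 4) : ℕ) * c a + fourthRootSum c A z) :=
        expect_comm ..
    _ = 𝔼 z, 𝔼 t : Fin 4, F (I ^ (t : ℕ) * c a + fourthRootSum c A z) :=
        expect_congr rfl fun z _ => Fintype.expect_equiv (Equiv.addLeft (z a)) _ _ fun _ => rfl

lemma expect_norm_fourthRootSum_sq (c : ι → ℂ) (A : Finset ι) :
    𝔼 z, ‖fourthRootSum c A z‖ ^ 2 = ∑ k ∈ A, ‖c k‖ ^ 2 := by
  induction A using Finset.induction_on with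
  | empty => simp [fourthRootSum]
  | insert a A ha ih =>
    rw [expect_fourthRootSum_insert (‖·‖ ^ 2) c ha, sum_insert ha, ← ih]
    simp only [expect_norm_I_pow_mul_add_sq, expect_add_distrib, Fintype.expect_const]

lemma expect_norm_fourthRootSum_pow_four_le (c : ι → ℂ) (A : Finset ι) :
    𝔼 z, ‖fourthRootSum c A z‖ ^ 4 ≤ 2 * (∑ k ∈ A, ‖c k‖ ^ 2) ^ 2 := by
  induction A using Finset.induction_on with
  | empty => simp [fourthRootSum]
  | insert a A ha ih =>
    rw [expect_fourthRootSum_insert (‖·‖ ^ 4) c ha, sum_insert ha]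
    simp only [expect_norm_I_pow_mul_add_pow_four, expect_add_distrib, Fintype.expect_const,
      ← mul_expect, expect_norm_fourthRootSum_sq]
    nlinarith [sq_nonneg (‖c a‖ ^ 2)]

lemma khintchine_fourthRootSum (c : ι → ℂ) :
    √(∑ k, ‖c k‖ ^ 2) ≤ √2 * 𝔼 z, ‖fourthRootSum c univ z‖ := by
  set σ₂ := ∑ k, ‖c k‖ ^ 2
  set m₁ := 𝔼 z, ‖fourthRootSum c univ z‖
  have hσ₂ : 0 ≤ σ₂ := sum_nonneg fun k _ => sq_nonneg _
  have key : σ₂ ^ 2 * σ₂ ≤ σ₂ ^ 2 * (2 * m₁ ^ 2) := by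
    calc σ₂ ^ 2 * σ₂ = (𝔼 z, ‖fourthRootSum c univ z‖ ^ 2) ^ 3 := by
          rw [expect_norm_fourthRootSum_sq]; ring
      _ ≤ m₁ ^ 2 * 𝔼 z, ‖fourthRootSum c univ z‖ ^ 4 :=
          expect_sq_pow_three_le _ _ fun z _ => norm_nonneg _
      _ ≤ m₁ ^ 2 * (2 * σ₂ ^ 2) := by
          gcongr; exact expect_norm_fourthRootSum_pow_four_le c univ
      _ = σ₂ ^ 2 * (2 * m₁ ^ 2) := by ring
  have hσ₂_le : σ₂ ≤ 2 * m₁ ^ 2 := by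
    rcases hσ₂.eq_or_lt with h | h
    · rw [← h]; positivity
    · exact le_of_mul_le_mul_left key (by positivity)
  refine Real.sqrt_le_iff.mpr ⟨by positivity, ?_⟩
  rwa [mul_pow, Real.sq_sqrt zero_le_two]

lemma sum_sqrt_sum_norm_sq_le {κ : Type*} [Fintype κ] (c : κ → ι → ℂ) (C : ℝ)
    (H : ∀ (x : κ → ℂ) (y : ι → ℂ), (∀ j, ‖x j‖ ≤ 1) → (∀ k, ‖y k‖ ≤ 1) →
      ‖∑ j, ∑ k, x j * y k * c j k‖ ≤ C) :
    ∑ j, √(∑ k, ‖c j k‖ ^ 2) ≤ √2 * C := by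
  have hz (z : ι → Fin 4) : ∑ j, ‖fourthRootSum (c j) univ z‖ ≤ C := by
    choose x hx hxS using fun j => Complex.exists_norm_eq_mul_self (fourthRootSum (c j) univ z)
    have hsum : ∑ j, ∑ k, x j * I ^ (z k : ℕ) * c j k
        = ((∑ j, ‖fourthRootSum (c j) univ z‖ : ℝ) : ℂ) := by
      push_cast
      refine sum_congr rfl fun j _ => ?_
      rw [hxS, fourthRootSum, mul_sum]
      exact sum_congr rfl fun k _ => mul_assoc _ _ _
    have := H x (fun k => I ^ (z k : ℕ)) (fun j => (hx j).le) (fun k => by simp)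
    rwa [hsum, Complex.norm_real, Real.norm_of_nonneg (by positivity)] at this
  calc ∑ j, √(∑ k, ‖c j k‖ ^ 2) ≤ ∑ j, √2 * 𝔼 z, ‖fourthRootSum (c j) univ z‖ :=
        sum_le_sum fun j _ => khintchine_fourthRootSum (c j)
    _ = √2 * 𝔼 z, ∑ j, ‖fourthRootSum (c j) univ z‖ := by rw [← mul_sum, expect_sum_comm]
    _ ≤ √2 * C := by gcongr; exact expect_le univ_nonempty fun z _ => hz z

end Khintchine

section Littlewood

variable {ι κ : Type*} [Fintype ι] [Fintype κ]

lemma sqrt_sum_sq_sum_le_sum_sqrt_sum_sq (b : ι → κ → ℝ) :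
    √(∑ j, (∑ k, b j k) ^ 2) ≤ ∑ k, √(∑ j, b j k ^ 2) := by
  have := norm_sum_le univ fun k => WithLp.toLp 2 (fun j => b j k)
  simpa [EuclideanSpace.norm_eq] using this

lemma sum_rpow_four_thirds_le (v : κ → ℝ) (hv : ∀ k, 0 ≤ v k) :
    ∑ k, v k ^ (4 / 3 : ℝ) ≤ √(∑ k, v k ^ 2) ^ (2 / 3 : ℝ) * (∑ k, v k) ^ (2 / 3 : ℝ) := by
  have := Real.inner_le_Lp_mul_Lq_of_nonneg univ (f := fun k => v k ^ (2 / 3 : ℝ))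
    (g := fun k => v k ^ (2 / 3 : ℝ)) (p := 3) (q := 3 / 2) ⟨by norm_num, by norm_num, by norm_num⟩
    (fun k _ => Real.rpow_nonneg (hv k) _) (fun k _ => Real.rpow_nonneg (hv k) _)
  simp only [← Real.rpow_add' (hv _) (by norm_num : (2 / 3 + 2 / 3 : ℝ) ≠ 0),
    ← Real.rpow_mul (hv _)] at this
  norm_num at this
  rw [Real.sqrt_eq_rpow, ← Real.rpow_mul (sum_nonneg fun k _ => sq_nonneg _)]
  norm_num
  exact this

lemma sum_sum_rpow_four_thirds_le (b : ι → κ → ℝ) (hb : ∀ j k, 0 ≤ b j k) :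
    ∑ j, ∑ k, b j k ^ (4 / 3 : ℝ)
      ≤ ((∑ j, √(∑ k, b j k ^ 2)) * ∑ k, √(∑ j, b j k ^ 2)) ^ (2 / 3 : ℝ) := by
  have hr (j : ι) : 0 ≤ √(∑ k, b j k ^ 2) := Real.sqrt_nonneg _
  have ht (j : ι) : 0 ≤ ∑ k, b j k := sum_nonneg fun k _ => hb j k
  have col := Real.inner_le_Lp_mul_Lq_of_nonneg univ (p := 3 / 2) (q := 3)
    (f := fun j => √(∑ k, b j k ^ 2) ^ (2 / 3 : ℝ)) (g := fun j => (∑ k, b j k) ^ (2 / 3 : ℝ))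
    ⟨by norm_num, by norm_num, by norm_num⟩
    (fun j _ => Real.rpow_nonneg (hr j) _) (fun j _ => Real.rpow_nonneg (ht j) _)
  simp only [← Real.rpow_mul (hr _), ← Real.rpow_mul (ht _)] at col
  norm_num at col
  calc ∑ j, ∑ k, b j k ^ (4 / 3 : ℝ)
      ≤ ∑ j, √(∑ k, b j k ^ 2) ^ (2 / 3 : ℝ) * (∑ k, b j k) ^ (2 / 3 : ℝ) :=
        sum_le_sum fun j _ => sum_rpow_four_thirds_le (b j) (hb j)
    _ ≤ (∑ j, √(∑ k, b j k ^ 2)) ^ (2 / 3 : ℝ) * √(∑ j, (∑ k, b j k) ^ 2) ^ (2 / 3 : ℝ) := by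
        convert col using 2
        rw [Real.sqrt_eq_rpow, ← Real.rpow_mul (sum_nonneg fun j _ => sq_nonneg _)]
        norm_num
    _ ≤ (∑ j, √(∑ k, b j k ^ 2)) ^ (2 / 3 : ℝ) * (∑ k, √(∑ j, b j k ^ 2)) ^ (2 / 3 : ℝ) := by
        gcongr; exact sqrt_sum_sq_sum_le_sum_sqrt_sum_sq b
    _ = _ := (Real.mul_rpow (sum_nonneg fun j _ => hr j) (by positivity)).symm

end Littlewood

lemma ContinuousMultilinearMap.map_vecCons_sum_smul {R M N ι : Type*} [CommSemiring R]
    [AddCommMonoid M] [Module R M] [TopologicalSpace M]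
    [AddCommMonoid N] [Module R N] [TopologicalSpace N] [Fintype ι]
    (f : ContinuousMultilinearMap R (fun _ : Fin 2 => M) N) (x y : ι → R) (v : ι → M) :
    f ![∑ j, x j • v j, ∑ k, y k • v k] = ∑ j, ∑ k, (x j * y k) • f ![v j, v k] := by
  have hsum : ![∑ j, x j • v j, ∑ k, y k • v k] = fun i => ∑ j, ![x j • v j, y j • v j] i := by
    ext i; fin_cases i <;> rfl
  have hsmul (j k : ι) : f ![x j • v j, y k • v k] = (x j * y k) • f ![v j, v k] := by
    calc f ![x j • v j, y k • v k] = f fun i => ![x j, y k] i • ![v j, v k] i := by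
          congr 1; ext i; fin_cases i <;> rfl
      _ = (x j * y k) • f ![v j, v k] := by rw [f.map_smul_univ, Fin.prod_univ_two]; rfl
  rw [hsum, f.map_sum, ← Fintype.sum_prod_type', ← (finTwoArrowEquiv ι).symm.sum_comp]
  simp only [← hsmul]
  refine Fintype.sum_congr _ _ fun p => congrArg f ?_
  ext i; fin_cases i <;> rfl

lemma toLp_top_eq_sum_smul_unitVecInf {n : ℕ} (x : Fin n → ℂ) :
    WithLp.toLp ⊤ x = ∑ j, x j • unitVecInf j := by
  ext k
  simp [unitVecInf, Pi.single_apply]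

lemma norm_sum_mul_apply_unitVecInf_le {n : ℕ}
    (T : ContinuousMultilinearMap ℂ (fun _ : Fin 2 => PiLp ⊤ (fun _ : Fin n => ℂ)) ℂ)
    {x y : Fin n → ℂ} (hx : ∀ j, ‖x j‖ ≤ 1) (hy : ∀ k, ‖y k‖ ≤ 1) :
    ‖∑ j, ∑ k, x j * y k * T ![unitVecInf j, unitVecInf k]‖ ≤ ‖T‖ := by
  have hnorm (z : Fin n → ℂ) (hz : ∀ j, ‖z j‖ ≤ 1) : ‖WithLp.toLp ⊤ z‖ ≤ 1 := by
    rw [PiLp.norm_toLp]; exact pi_norm_le_iff_of_nonneg zero_le_one |>.mpr hz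
  calc ‖∑ j, ∑ k, x j * y k * T ![unitVecInf j, unitVecInf k]‖
      = ‖T ![WithLp.toLp ⊤ x, WithLp.toLp ⊤ y]‖ := by
        simp only [toLp_top_eq_sum_smul_unitVecInf, T.map_vecCons_sum_smul, smul_eq_mul]
    _ ≤ ‖T‖ * ∏ i : Fin 2, 1 := by
        refine T.le_opNorm_mul_prod_of_le fun i => ?_
        fin_cases i
        exacts [hnorm x hx, hnorm y hy]
    _ = ‖T‖ := by simp

theorem stmt9_general (n : ℕ)
    (T : ContinuousMultilinearMap ℂ (fun _ : Fin 2 => PiLp ⊤ (fun _ : Fin n => ℂ)) ℂ) :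
    (∑ j : Fin n, ∑ k : Fin n,
        ‖T ![unitVecInf j, unitVecInf k]‖ ^ ((4 : ℝ) / 3)) ^ ((3 : ℝ) / 4)
      ≤ Real.sqrt 2 * ‖T‖ := by
  set a : Fin n → Fin n → ℂ := fun j k => T ![unitVecInf j, unitVecInf k]
  have rows : ∑ j, √(∑ k, ‖a j k‖ ^ 2) ≤ √2 * ‖T‖ :=
    sum_sqrt_sum_norm_sq_le a ‖T‖ fun x y hx hy => norm_sum_mul_apply_unitVecInf_le T hx hy
  have cols : ∑ k, √(∑ j, ‖a j k‖ ^ 2) ≤ √2 * ‖T‖ := by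
    refine sum_sqrt_sum_norm_sq_le (fun k j => a j k) ‖T‖ fun x y hx hy => ?_
    rw [sum_comm]
    simpa only [mul_comm (x _)] using norm_sum_mul_apply_unitVecInf_le T hy hx
  have hM : 0 ≤ √2 * ‖T‖ := by positivity
  calc (∑ j, ∑ k, ‖a j k‖ ^ ((4 : ℝ) / 3)) ^ ((3 : ℝ) / 4)
      ≤ (((∑ j, √(∑ k, ‖a j k‖ ^ 2)) * ∑ k, √(∑ j, ‖a j k‖ ^ 2)) ^ ((2 : ℝ) / 3))
          ^ ((3 : ℝ) / 4) := by
        gcongr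
        exact sum_sum_rpow_four_thirds_le (fun j k => ‖a j k‖) fun _ _ => norm_nonneg _
    _ ≤ (((√2 * ‖T‖) * (√2 * ‖T‖)) ^ ((2 : ℝ) / 3)) ^ ((3 : ℝ) / 4) := by gcongr
    _ = √2 * ‖T‖ := by
        rw [← Real.rpow_mul (by positivity), ← sq, ← Real.rpow_natCast, ← Real.rpow_mul hM]
        norm_num

theorem stmt9 (n : ℕ) (hn : 0 < n)
    (T : ContinuousMultilinearMap ℂ (fun _ : Fin 2 => PiLp ⊤ (fun _ : Fin n => ℂ)) ℂ) :
    (∑ j : Fin n, ∑ k : Fin n,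
        ‖T ![unitVecInf j, unitVecInf k]‖ ^ ((4 : ℝ) / 3)) ^ ((3 : ℝ) / 4)
      ≤ Real.sqrt 2 * ‖T‖ :=
  stmt9_general n T
end

section
/- Let s ≥ 1 be an integer, p_1,…,p_s ∈ (1,∞] with λ = 1/p_1 + ⋯ + 1/p_s satisfying 1/2 ≤ λ < 1, and let C ≥ 1. Suppose that for every positive integer n and every (s+1)-linear form S : ℓ_{p_1}^n × ⋯ × ℓ_{p_s}^n × ℓ_∞^n → 𝕂 one has (∑_{j_1,…,j_{s+1}=1}^n |S(e_{j_1},…,e_{j_{s+1}})|^{1/(1−λ)})^{1−λ} ≤ C ‖S‖. Then for every p_{s+1} ∈ (1,∞] with λ + 1/p_{s+1} < 1, every positive integer n and every (s+1)-linear form T : ℓ_{p_1}^n × ⋯ × ℓ_{p_s}^n × ℓ_{p_{s+1}}^n → 𝕂, (∑_{j_1,…,j_{s+1}=1}^n |T(e_{j_1},…,e_{j_{s+1}})|^{1/(1−λ−1/p_{s+1})})^{1−λ−1/p_{s+1}} ≤ C ‖T‖. -/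
/-!
Compose `T` in its last variable with the diagonal operator `x ↦ (a_k x_k)` from `ℓ_∞^n` to
`ℓ_P^n`, `P = p_{s+1}`, which has norm at most one when `‖a‖_P ≤ 1`. The hypothesis then gives
`(∑_j (a_{j_{s+1}} |T(e_j)|)^μ)^{1/μ} ≤ C ‖T‖` with `μ = 1/(1-λ)`. Grouping the sum by the last
index `k` into `∑_k a_k^μ c_k`, where `c_k = ∑_{j_{s+1} = k} |T(e_j)|^μ`, Hölder duality between
the exponents `ρ/μ` and `P/μ`, with `1/ρ = 1/μ - 1/P`, shows that the supremum over such `a` is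
`‖c‖_{ρ/μ}^{1/μ}`; this dominates the `ℓ_ρ` norm of the coefficients `T(e_j)` because `ρ ≥ μ`.
-/

open scoped ENNReal

open Finset

namespace NNReal

theorem sum_rpow_le_rpow_sum_s12 {ι : Type*} (s : Finset ι) (f : ι → ℝ≥0) {p : ℝ} (hp : 1 ≤ p) :
    ∑ i ∈ s, f i ^ p ≤ (∑ i ∈ s, f i) ^ p := by
  induction s using Finset.cons_induction with
  | empty => simp
  | cons a s _ ih =>
    rw [sum_cons, sum_cons]
    exact (add_le_add le_rfl ih).trans (add_rpow_le_rpow_add _ _ hp)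

theorem rpow_sum_rpow_le_of_forall_weighted_le {κ ι : Type*} [Fintype κ] [Fintype ι]
    [DecidableEq ι] (π : κ → ι) (t : κ → ℝ≥0) {ρ P μ : ℝ} (h : ρ.HolderTriple P μ) {M : ℝ≥0}
    (hM : ∀ a : ι → ℝ≥0, ∑ i, a i ^ P ≤ 1 → (∑ x, (a (π x) * t x) ^ μ) ^ (1 / μ) ≤ M) :
    (∑ x, t x ^ ρ) ^ (1 / ρ) ≤ M := by
  have hμ : 0 < μ := h.pos'
  have hρ : 0 < ρ := h.pos
  have hconj : (ρ / μ).HolderConjugate (P / μ) := h.holderConjugate_div_div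
  set c : ι → ℝ≥0 := fun i => ∑ x with π x = i, t x ^ μ
  obtain ⟨g, hg, hgc⟩ := (isGreatest_Lp univ c hconj).1
  simp only [Set.mem_ofPred_eq] at hg hgc
  set a : ι → ℝ≥0 := fun i => g i ^ (1 / μ)
  have ha : ∑ i, a i ^ P ≤ 1 := by
    simpa only [a, ← rpow_mul, one_div_mul_eq_div] using hg
  have hweighted : ∑ x, (a (π x) * t x) ^ μ = ∑ i, c i * g i := by
    rw [← sum_fiberwise univ π]
    refine sum_congr rfl fun i _ => ?_
    rw [sum_mul]
    refine sum_congr rfl fun x hx => ?_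
    rw [(mem_filter.1 hx).2, mul_rpow, ← rpow_mul, one_div_mul_cancel hμ.ne', rpow_one, mul_comm]
  calc (∑ x, t x ^ ρ) ^ (1 / ρ)
      = (∑ i, ∑ x with π x = i, (t x ^ μ) ^ (ρ / μ)) ^ (1 / ρ) := by
        rw [sum_fiberwise univ π]
        simp only [← rpow_mul, mul_div_cancel₀ _ hμ.ne']
    _ ≤ (∑ i, c i ^ (ρ / μ)) ^ (1 / ρ) := by
        gcongr with i
        exact sum_rpow_le_rpow_sum_s12 _ _ hconj.lt.le
    _ = ((∑ i, c i ^ (ρ / μ)) ^ (1 / (ρ / μ))) ^ (1 / μ) := by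
        rw [← rpow_mul]
        congr 1
        field_simp
    _ = (∑ x, (a (π x) * t x) ^ μ) ^ (1 / μ) := by rw [hweighted, hgc]
    _ ≤ M := hM a ha

end NNReal

section

variable {𝕂 : Type*} [RCLike 𝕂] {n : ℕ}

theorem exists_clm_unitVec_of_eq {r r' : ℝ≥0∞} [Fact (1 ≤ r)] [Fact (1 ≤ r')] (h : r = r') :
    ∃ f : PiLp r (fun _ : Fin n => 𝕂) →L[𝕂] PiLp r' (fun _ : Fin n => 𝕂),
      ‖f‖ ≤ 1 ∧ ∀ j, f (unitVec 𝕂 r j) = unitVec 𝕂 r' j := by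
  subst h
  exact ⟨.id 𝕂 _, ContinuousLinearMap.norm_id_le, fun _ => rfl⟩

theorem exists_diagonal_clm_unitVec {r : ℝ≥0∞} [Fact (1 ≤ r)] (hr : r ≠ ⊤) (a : Fin n → 𝕂)
    (ha : ∑ k, ‖a k‖ ^ r.toReal ≤ 1) :
    ∃ f : PiLp ⊤ (fun _ : Fin n => 𝕂) →L[𝕂] PiLp r (fun _ : Fin n => 𝕂),
      ‖f‖ ≤ 1 ∧ ∀ j, f (unitVec 𝕂 ⊤ j) = a j • unitVec 𝕂 r j := by
  have hr₀ : 0 < r.toReal := ENNReal.toReal_pos (zero_lt_one.trans_le Fact.out).ne' hr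
  let L : PiLp ⊤ (fun _ : Fin n => 𝕂) →ₗ[𝕂] PiLp r (fun _ : Fin n => 𝕂) :=
    (WithLp.linearEquiv r 𝕂 (Fin n → 𝕂)).symm.toLinearMap ∘ₗ
      LinearMap.pi (fun k => a k • LinearMap.proj k) ∘ₗ
        (WithLp.linearEquiv ⊤ 𝕂 (Fin n → 𝕂)).toLinearMap
  have hL : ∀ x k, L x k = a k * x k := fun _ _ => rfl
  have hbound : ∀ x, ‖L x‖ ≤ 1 * ‖x‖ := by
    intro x
    have hpow : ∑ k, ‖L x k‖ ^ r.toReal ≤ ‖x‖ ^ r.toReal :=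
      calc ∑ k, ‖L x k‖ ^ r.toReal = ∑ k, ‖a k‖ ^ r.toReal * ‖x k‖ ^ r.toReal := by
            simp only [hL, norm_mul, Real.mul_rpow (norm_nonneg _) (norm_nonneg _)]
        _ ≤ ∑ k, ‖a k‖ ^ r.toReal * ‖x‖ ^ r.toReal := by
            gcongr with k
            exact PiLp.norm_apply_le x k
        _ ≤ ‖x‖ ^ r.toReal := by
            rw [← sum_mul]
            exact mul_le_of_le_one_left (by positivity) ha
    rw [one_mul, PiLp.norm_eq_sum hr₀, ← Real.rpow_rpow_inv (norm_nonneg x) hr₀.ne', one_div]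
    gcongr
  refine ⟨L.mkContinuous 1 hbound, L.mkContinuous_norm_le zero_le_one hbound, fun j => ?_⟩
  ext k
  by_cases hkj : k = j <;> simp [L, unitVec, hkj]

variable {ι : Type*} [Fintype ι] [DecidableEq ι] {F : Type*} [NormedAddCommGroup F]
  [NormedSpace 𝕂 F] {q q' : ι → ℝ≥0∞} [∀ i, Fact (1 ≤ q i)] [∀ i, Fact (1 ≤ q' i)] {i₀ : ι}

theorem exists_norm_apply_unitVec_eq_mul
    (hq' : ∀ i ≠ i₀, q' i = q i) (hq'₀ : q' i₀ = ⊤) (hq₀ : q i₀ ≠ ⊤)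
    (a : Fin n → 𝕂) (ha : ∑ k, ‖a k‖ ^ (q i₀).toReal ≤ 1)
    (T : ContinuousMultilinearMap 𝕂 (fun i => PiLp (q i) (fun _ : Fin n => 𝕂)) F) :
    ∃ S : ContinuousMultilinearMap 𝕂 (fun i => PiLp (q' i) (fun _ : Fin n => 𝕂)) F,
      ‖S‖ ≤ ‖T‖ ∧ ∀ j : ι → Fin n, ‖S (fun i => unitVec 𝕂 (q' i) (j i))‖ =
        ‖a (j i₀)‖ * ‖T (fun i => unitVec 𝕂 (q i) (j i))‖ := by
  have hd : ∀ i, ∃ d : PiLp (q' i) (fun _ : Fin n => 𝕂) →L[𝕂] PiLp (q i) (fun _ : Fin n => 𝕂),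
      ‖d‖ ≤ 1 ∧ ∀ k, d (unitVec 𝕂 (q' i) k) =
        (if i = i₀ then a k else 1) • unitVec 𝕂 (q i) k := by
    intro i
    by_cases hi : i = i₀
    · subst hi
      obtain ⟨e, he, hek⟩ := exists_clm_unitVec_of_eq (𝕂 := 𝕂) (n := n) hq'₀
      obtain ⟨f, hf, hfk⟩ := exists_diagonal_clm_unitVec hq₀ a ha
      refine ⟨f.comp e, ?_, fun k => by simp [hek, hfk]⟩
      calc ‖f.comp e‖ ≤ ‖f‖ * ‖e‖ := f.opNorm_comp_le e
        _ ≤ 1 := mul_le_one₀ hf (norm_nonneg _) he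
    · obtain ⟨e, he, hek⟩ := exists_clm_unitVec_of_eq (𝕂 := 𝕂) (n := n) (hq' i hi)
      exact ⟨e, he, fun k => by simp [hek, hi]⟩
  choose d hd_norm hd_apply using hd
  refine ⟨T.compContinuousLinearMap d, ?_, fun j => ?_⟩
  · calc ‖T.compContinuousLinearMap d‖ ≤ ‖T‖ * ∏ i, ‖d i‖ := T.norm_compContinuousLinearMap_le d
      _ ≤ ‖T‖ * 1 := by
          gcongr
          exact prod_le_one (fun i _ => norm_nonneg _) fun i _ => hd_norm i
      _ = ‖T‖ := mul_one _
  · simp only [ContinuousMultilinearMap.compContinuousLinearMap_apply, hd_apply,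
      T.map_smul_univ, norm_smul, prod_ite_eq', mem_univ, if_true]

theorem rpow_sum_norm_apply_unitVec_le_of_top
    (hq' : ∀ i ≠ i₀, q' i = q i) (hq'₀ : q' i₀ = ⊤) (hq₀ : q i₀ ≠ ⊤)
    {ρ μ C : ℝ} (hρμ : ρ.HolderTriple (q i₀).toReal μ) (hC : 0 ≤ C)
    (hS : ∀ S : ContinuousMultilinearMap 𝕂 (fun i => PiLp (q' i) (fun _ : Fin n => 𝕂)) F,
      (∑ j : ι → Fin n, ‖S (fun i => unitVec 𝕂 (q' i) (j i))‖ ^ μ) ^ (1 / μ) ≤ C * ‖S‖)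
    (T : ContinuousMultilinearMap 𝕂 (fun i => PiLp (q i) (fun _ : Fin n => 𝕂)) F) :
    (∑ j : ι → Fin n, ‖T (fun i => unitVec 𝕂 (q i) (j i))‖ ^ ρ) ^ (1 / ρ) ≤ C * ‖T‖ := by
  have hCT : 0 ≤ C * ‖T‖ := by positivity
  have key := NNReal.rpow_sum_rpow_le_of_forall_weighted_le (fun j : ι → Fin n => j i₀)
    (fun j => ‖T (fun i => unitVec 𝕂 (q i) (j i))‖₊) hρμ (M := (C * ‖T‖).toNNReal) ?_
  · rw [← NNReal.coe_le_coe, Real.coe_toNNReal _ hCT] at key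
    simpa only [NNReal.coe_rpow, NNReal.coe_sum, coe_nnnorm] using key
  intro a ha
  obtain ⟨S, hST, hSa⟩ := exists_norm_apply_unitVec_eq_mul hq' hq'₀ hq₀
    (fun k => ((a k : ℝ) : 𝕂)) (by simpa [← NNReal.coe_le_coe] using ha) T
  rw [← NNReal.coe_le_coe, Real.coe_toNNReal _ hCT]
  push_cast
  calc _ = (∑ j : ι → Fin n, ‖S (fun i => unitVec 𝕂 (q' i) (j i))‖ ^ μ) ^ (1 / μ) := by
        simp [hSa]
    _ ≤ C * ‖S‖ := hS S
    _ ≤ C * ‖T‖ := by gcongr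

end

theorem stmt12_general (𝕂 : Type*) [RCLike 𝕂] (s : ℕ)
    (p : Fin s → ℝ≥0∞)
    (C : ℝ) (hC : 1 ≤ C)
    -- hypothesis: the Hardy–Littlewood inequality with constant `C` holds for all
    -- `(s+1)`-linear forms on `ℓ_{p_1}^n × ⋯ × ℓ_{p_s}^n × ℓ_∞^n`
    (hyp : ∀ (q : Fin (s + 1) → ℝ≥0∞), (∀ i : Fin s, q i.castSucc = p i) →
      q (Fin.last s) = ⊤ →
      ∀ [∀ i, Fact (1 ≤ q i)], ∀ (n : ℕ), 0 < n →
      ∀ S : ContinuousMultilinearMap 𝕂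
          (fun i : Fin (s + 1) => PiLp (q i) (fun _ : Fin n => 𝕂)) 𝕂,
        (∑ j : Fin (s + 1) → Fin n,
            ‖S (fun i => unitVec 𝕂 (q i) (j i))‖ ^
              ((1 : ℝ) / (1 - ∑ i, (1 / p i).toReal))) ^
            (1 - ∑ i, (1 / p i).toReal)
          ≤ C * ‖S‖) :
    -- conclusion: it also holds, with the appropriately improved exponent, for all
    -- `(s+1)`-linear forms on `ℓ_{p_1}^n × ⋯ × ℓ_{p_s}^n × ℓ_{p_{s+1}}^n`
    ∀ (pl : ℝ≥0∞), 1 < pl → (∑ i, (1 / p i).toReal) + (1 / pl).toReal < 1 →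
    ∀ (q : Fin (s + 1) → ℝ≥0∞), (∀ i : Fin s, q i.castSucc = p i) →
      q (Fin.last s) = pl →
      ∀ [∀ i, Fact (1 ≤ q i)], ∀ (n : ℕ), 0 < n →
      ∀ T : ContinuousMultilinearMap 𝕂
          (fun i : Fin (s + 1) => PiLp (q i) (fun _ : Fin n => 𝕂)) 𝕂,
        (∑ j : Fin (s + 1) → Fin n,
            ‖T (fun i => unitVec 𝕂 (q i) (j i))‖ ^
              ((1 : ℝ) / (1 - (∑ i, (1 / p i).toReal) - (1 / pl).toReal))) ^
            (1 - (∑ i, (1 / p i).toReal) - (1 / pl).toReal)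
          ≤ C * ‖T‖ := by
  intro pl hpl hlam q hqp hql _ n hn T
  rcases eq_or_ne pl ⊤ with rfl | hpl_top
  · simpa using hyp q hqp hql n hn T
  set lam := ∑ i, (1 / p i).toReal
  let q' := Function.update q (Fin.last s) ⊤
  have hq' : ∀ i ≠ Fin.last s, q' i = q i := fun i hi => Function.update_of_ne hi _ _
  have hq'₀ : q' (Fin.last s) = ⊤ := Function.update_self _ _ _
  have _ : ∀ i, Fact (1 ≤ q' i) := fun i => by
    rcases eq_or_ne i (Fin.last s) with rfl | hi
    · rw [hq'₀]; infer_instance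
    · rw [hq' i hi]; infer_instance
  have hP : 0 < pl.toReal := ENNReal.toReal_pos (zero_lt_one.trans hpl).ne' hpl_top
  rw [one_div pl, ENNReal.toReal_inv] at hlam ⊢
  have hρμ : (1 / (1 - lam - pl.toReal⁻¹)).HolderTriple (q (Fin.last s)).toReal
      (1 / (1 - lam)) := by
    rw [hql]
    refine ⟨?_, one_div_pos.2 (by linarith), hP⟩
    simp only [one_div, inv_inv]
    ring
  have hS : ∀ S : ContinuousMultilinearMap 𝕂 (fun i => PiLp (q' i) (fun _ : Fin n => 𝕂)) 𝕂,
      (∑ j : Fin (s + 1) → Fin n, ‖S (fun i => unitVec 𝕂 (q' i) (j i))‖ ^ (1 / (1 - lam))) ^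
        (1 / (1 / (1 - lam))) ≤ C * ‖S‖ := by
    intro S
    rw [one_div_one_div]
    exact hyp q' (fun i => (hq' _ (Fin.castSucc_lt_last i).ne).trans (hqp i)) hq'₀ n hn S
  simpa only [one_div_one_div] using
    rpow_sum_norm_apply_unitVec_le_of_top hq' hq'₀ (hql ▸ hpl_top) hρμ (by linarith) hS T

theorem stmt12 (𝕂 : Type*) [RCLike 𝕂] (s : ℕ) (hs : 1 ≤ s)
    (p : Fin s → ℝ≥0∞) (hp : ∀ i, 1 < p i)
    (hlo : (1 : ℝ) / 2 ≤ ∑ i, (1 / p i).toReal)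
    (hhi : ∑ i, (1 / p i).toReal < 1)
    (C : ℝ) (hC : 1 ≤ C)
    -- hypothesis: the Hardy–Littlewood inequality with constant `C` holds for all
    -- `(s+1)`-linear forms on `ℓ_{p_1}^n × ⋯ × ℓ_{p_s}^n × ℓ_∞^n`
    (hyp : ∀ (q : Fin (s + 1) → ℝ≥0∞), (∀ i : Fin s, q i.castSucc = p i) →
      q (Fin.last s) = ⊤ →
      ∀ [∀ i, Fact (1 ≤ q i)], ∀ (n : ℕ), 0 < n →
      ∀ S : ContinuousMultilinearMap 𝕂
          (fun i : Fin (s + 1) => PiLp (q i) (fun _ : Fin n => 𝕂)) 𝕂,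
        (∑ j : Fin (s + 1) → Fin n,
            ‖S (fun i => unitVec 𝕂 (q i) (j i))‖ ^
              ((1 : ℝ) / (1 - ∑ i, (1 / p i).toReal))) ^
            (1 - ∑ i, (1 / p i).toReal)
          ≤ C * ‖S‖) :
    -- conclusion: it also holds, with the appropriately improved exponent, for all
    -- `(s+1)`-linear forms on `ℓ_{p_1}^n × ⋯ × ℓ_{p_s}^n × ℓ_{p_{s+1}}^n`
    ∀ (pl : ℝ≥0∞), 1 < pl → (∑ i, (1 / p i).toReal) + (1 / pl).toReal < 1 →
    ∀ (q : Fin (s + 1) → ℝ≥0∞), (∀ i : Fin s, q i.castSucc = p i) →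
      q (Fin.last s) = pl →
      ∀ [∀ i, Fact (1 ≤ q i)], ∀ (n : ℕ), 0 < n →
      ∀ T : ContinuousMultilinearMap 𝕂
          (fun i : Fin (s + 1) => PiLp (q i) (fun _ : Fin n => 𝕂)) 𝕂,
        (∑ j : Fin (s + 1) → Fin n,
            ‖T (fun i => unitVec 𝕂 (q i) (j i))‖ ^
              ((1 : ℝ) / (1 - (∑ i, (1 / p i).toReal) - (1 / pl).toReal))) ^
            (1 - (∑ i, (1 / p i).toReal) - (1 / pl).toReal)
          ≤ C * ‖T‖ :=
  stmt12_general 𝕂 s p C hC hyp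
end
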